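/- arXiv:1712.04059 — 5 statements merged into one kernel-verified Lean document; each statement's English description precedes it below -/
import Mathlib

section
/- Let G = (V, E) be a finite simple graph whose vertex set is partitioned as V = R ⊔ W, with no edge having both endpoints in R. Let (M_1, …, M_N; t_1, …, t_N) be a unit-time schedule on G with link-time vector t_e := Σ_{i : e ∈ M_i} t_i, and for each k ≥ 0 let t'_k := Σ_{i : M_i has exactly k edges with both endpoints in W} t_i. Then Σ_{e having an endpoint in R} t_e ≤ |R| − Σ_{k ≥ 0} max(0, |R| − |W| + 2k) · t'_k. -/
/-- `M` is a matching of the simple graph `G`: a set of edges of `G`,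
no two of which share a vertex. -/
def IsMatchingOf {V : Type*} (G : SimpleGraph V) (M : Finset (Sym2 V)) : Prop :=
  (∀ e ∈ M, e ∈ G.edgeSet) ∧ ∀ e ∈ M, ∀ f ∈ M, e ≠ f → ∀ v, v ∈ e → v ∉ f

/-- Vertex-disjoint edges: total count of `A`-vertices covered is at most `|A|`. -/
lemma matching_sum_card {V : Type*} [DecidableEq V] (M : Finset (Sym2 V))
    (hM : ∀ e ∈ M, ∀ f ∈ M, e ≠ f → ∀ v, v ∈ e → v ∉ f) (A : Finset V) :
    ∑ e ∈ M, (A.filter (· ∈ e)).card ≤ A.card := by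
  rw [← Finset.card_biUnion]
  · refine Finset.card_le_card ?_
    intro v hv
    simp only [Finset.mem_biUnion] at hv
    obtain ⟨e, _, hv⟩ := hv
    exact (Finset.mem_filter.mp hv).1
  · intro e he f hf hef
    refine Finset.disjoint_left.mpr ?_
    intro v hv hv'
    exact hM e he f hf hef v (Finset.mem_filter.mp hv).2 (Finset.mem_filter.mp hv').2

lemma slot_bounds {V : Type*} [Fintype V] [DecidableEq V]
    (G : SimpleGraph V) (R W : Finset V) (hdisj : Disjoint R W)
    (hnoRR : ∀ e ∈ G.edgeSet, ∃ v ∈ e, v ∈ W)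
    (M : Finset (Sym2 V)) (hm : IsMatchingOf G M) :
    ((M.filter (fun e => ∃ v ∈ e, v ∈ R)).card ≤ R.card) ∧
    ((M.filter (fun e => ∃ v ∈ e, v ∈ R)).card
      + 2 * (M.filter (fun e => ∀ v ∈ e, v ∈ W)).card ≤ W.card) := by
  obtain ⟨hE, hMM⟩ := hm
  set S := M.filter (fun e => ∃ v ∈ e, v ∈ R) with hS
  set K := M.filter (fun e => ∀ v ∈ e, v ∈ W) with hK
  have hSK : Disjoint S K := by
    refine Finset.disjoint_left.mpr ?_
    intro e heS heK
    obtain ⟨v, hv, hvR⟩ := (Finset.mem_filter.mp heS).2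
    exact (Finset.disjoint_left.mp hdisj hvR) ((Finset.mem_filter.mp heK).2 v hv)
  constructor
  · calc S.card = ∑ e ∈ S, 1 := by simp
      _ ≤ ∑ e ∈ S, (R.filter (· ∈ e)).card := by
          refine Finset.sum_le_sum ?_
          intro e he
          obtain ⟨v, hv, hvR⟩ := (Finset.mem_filter.mp he).2
          exact Finset.card_pos.mpr ⟨v, Finset.mem_filter.mpr ⟨hvR, hv⟩⟩
      _ ≤ ∑ e ∈ M, (R.filter (· ∈ e)).card :=
          Finset.sum_le_sum_of_subset (Finset.filter_subset _ _)
      _ ≤ R.card := matching_sum_card M hMM R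
  · calc S.card + 2 * K.card = ∑ e ∈ S, 1 + ∑ e ∈ K, 2 := by
          simp [Finset.sum_const, mul_comm]
      _ = ∑ e ∈ S ∪ K, (if e ∈ S then 1 else 2) := by
          rw [Finset.sum_union hSK]
          congr 1
          · exact (Finset.sum_congr rfl (by intro e he; simp [he])).symm
          · refine (Finset.sum_congr rfl ?_).symm
            intro e he
            simp [Finset.disjoint_right.mp hSK he]
      _ ≤ ∑ e ∈ S ∪ K, (W.filter (· ∈ e)).card := by
          refine Finset.sum_le_sum ?_
          intro e he
          by_cases heS : e ∈ S
          · simp only [heS, if_true]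
            obtain ⟨v, hv, hvW⟩ := hnoRR e (hE e (Finset.mem_filter.mp heS).1)
            exact Finset.card_pos.mpr ⟨v, Finset.mem_filter.mpr ⟨hvW, hv⟩⟩
          · simp only [heS, if_false]
            have heK : e ∈ K := by
              rcases Finset.mem_union.mp he with h | h
              · exact absurd h heS
              · exact h
            obtain ⟨heM, hW⟩ := Finset.mem_filter.mp heK
            induction e using Sym2.ind with
            | _ a b =>
              have hab : a ≠ b := by
                have := hE _ heM
                rw [SimpleGraph.mem_edgeSet] at this
                exact G.ne_of_adj this
              have hsub : ({a, b} : Finset V) ⊆ W.filter (· ∈ s(a,b)) := by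
                intro x hx
                simp only [Finset.mem_insert, Finset.mem_singleton] at hx
                rcases hx with rfl | rfl
                · exact Finset.mem_filter.mpr ⟨hW x (by simp), by simp⟩
                · exact Finset.mem_filter.mpr ⟨hW x (by simp), by simp⟩
              calc 2 = ({a, b} : Finset V).card := by
                    rw [Finset.card_insert_of_notMem (by simpa using hab)]; simp
                _ ≤ _ := Finset.card_le_card hsub
      _ ≤ ∑ e ∈ M, (W.filter (· ∈ e)).card := by
          refine Finset.sum_le_sum_of_subset ?_
          exact Finset.union_subset (Finset.filter_subset _ _) (Finset.filter_subset _ _)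
      _ ≤ W.card := matching_sum_card M hMM W

/-- constraint (6d): let `G` be a finite simple graph whose
vertices are partitioned into `R` and `W` with no edge inside `R`, and let
`(M₁,…,M_N; t₁,…,t_N)` be a unit-time schedule with link times
`t_e = ∑_{i : e ∈ M i} t i`.  With `t'_k` the total length of the slots whose
matching has exactly `k` edges inside `W`, the total link time of the edges
touching `R` is at most `|R| - ∑_k max(0, |R| - |W| + 2k) · t'_k`. -/
theorem schedule_eNB_time_constraint {V : Type*} [Fintype V] [DecidableEq V]
    (G : SimpleGraph V) [DecidableRel G.Adj]
    (R W : Finset V) (hdisj : Disjoint R W) (hcover : R ∪ W = Finset.univ)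
    (hnoRR : ∀ e ∈ G.edgeSet, ∃ v ∈ e, v ∈ W)
    (N : ℕ) (M : Fin N → Finset (Sym2 V)) (t : Fin N → ℝ)
    (hmatch : ∀ i, IsMatchingOf G (M i))
    (ht : ∀ i, 0 ≤ t i) (htot : ∑ i, t i ≤ 1) :
    ∑ e ∈ G.edgeFinset.filter (fun e => ∃ v ∈ e, v ∈ R),
        (∑ i, if e ∈ M i then t i else 0) ≤
      (R.card : ℝ) - ∑ k ∈ Finset.range (W.card + 1),
        max 0 ((R.card : ℝ) - (W.card : ℝ) + 2 * k) *
          (∑ i ∈ Finset.univ.filter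
              (fun i => ((M i).filter (fun e => ∀ v ∈ e, v ∈ W)).card = k), t i) := by
  set c : Fin N → ℕ := fun i => ((M i).filter (fun e => ∃ v ∈ e, v ∈ R)).card with hc
  set k : Fin N → ℕ := fun i => ((M i).filter (fun e => ∀ v ∈ e, v ∈ W)).card with hk
  have hb : ∀ i, c i ≤ R.card ∧ c i + 2 * k i ≤ W.card := fun i =>
    slot_bounds G R W hdisj hnoRR (M i) (hmatch i)
  -- LHS rewrite
  have hLHS : ∑ e ∈ G.edgeFinset.filter (fun e => ∃ v ∈ e, v ∈ R),
      (∑ i, if e ∈ M i then t i else 0) = ∑ i, (c i : ℝ) * t i := by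
    rw [Finset.sum_comm]
    refine Finset.sum_congr rfl ?_
    intro i _
    have hsub : (G.edgeFinset.filter (fun e => ∃ v ∈ e, v ∈ R)).filter (· ∈ M i)
        = (M i).filter (fun e => ∃ v ∈ e, v ∈ R) := by
      ext e
      simp only [Finset.mem_filter, SimpleGraph.mem_edgeFinset]
      constructor
      · rintro ⟨⟨-, h⟩, hm⟩; exact ⟨hm, h⟩
      · rintro ⟨hm, h⟩; exact ⟨⟨(hmatch i).1 e hm, h⟩, hm⟩
    rw [← Finset.sum_filter, hsub, Finset.sum_const, nsmul_eq_mul]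
  -- RHS sum rewrite
  have hRHS : ∑ kk ∈ Finset.range (W.card + 1),
      max 0 ((R.card : ℝ) - (W.card : ℝ) + 2 * kk) *
        (∑ i ∈ Finset.univ.filter
            (fun i => ((M i).filter (fun e => ∀ v ∈ e, v ∈ W)).card = kk), t i)
      = ∑ i, max 0 ((R.card : ℝ) - (W.card : ℝ) + 2 * k i) * t i := by
    rw [← Finset.sum_fiberwise_of_maps_to (g := k) (t := Finset.range (W.card + 1))
      (fun i _ => Finset.mem_range.mpr (by have := (hb i).2; omega))]
    refine Finset.sum_congr rfl ?_
    intro kk _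
    rw [Finset.mul_sum]
    refine Finset.sum_congr rfl ?_
    intro i hi
    have : k i = kk := (Finset.mem_filter.mp hi).2
    rw [this]
  rw [hLHS, hRHS, ← sub_nonneg]
  have key : ∀ i, (c i : ℝ) * t i + max 0 ((R.card : ℝ) - (W.card : ℝ) + 2 * k i) * t i
      ≤ (R.card : ℝ) * t i := by
    intro i
    have h1 : (c i : ℝ) ≤ R.card := by exact_mod_cast (hb i).1
    have h2 : (c i : ℝ) + 2 * (k i : ℝ) ≤ W.card := by
      have := (hb i).2; push_cast; exact_mod_cast this
    have hmax : max 0 ((R.card : ℝ) - (W.card : ℝ) + 2 * k i) ≤ (R.card : ℝ) - c i :=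
      max_le (by linarith) (by linarith)
    nlinarith [ht i]
  have : ∑ i, (c i : ℝ) * t i + ∑ i, max 0 ((R.card : ℝ) - (W.card : ℝ) + 2 * k i) * t i
      ≤ (R.card : ℝ) := by
    rw [← Finset.sum_add_distrib]
    calc _ ≤ ∑ i, (R.card : ℝ) * t i := Finset.sum_le_sum (fun i _ => key i)
      _ = (R.card : ℝ) * ∑ i, t i := by rw [Finset.mul_sum]
      _ ≤ (R.card : ℝ) * 1 := by
          exact mul_le_mul_of_nonneg_left htot (by positivity)
      _ = _ := mul_one _
  linarith
end

section
/- Let W, R ∈ ℕ with W + R ≥ 1 and let G = (V, E) be a finite simple graph whose vertex set is partitioned as V = A ⊔ B with |A| = R and |B| = W, such that no edge has both endpoints in A, every vertex of A has degree at most W, and every vertex of B has degree at most W + R − 1. Let t^g > 0 and let t : E → ℝ satisfy t_e ≥ 0 for all e and Σ_{e ∈ δ(v)} t_e ≤ 1 for every vertex v. Then Σ_{e ∈ E} ⌈t_e / t^g⌉ < (1/2) · (W² + (2R − 1)W + (W + R)/t^g). -/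
/-- edge-count bound of Lemma 3: let `G` be a finite simple
graph whose vertices are partitioned into `A` (with `|A| = R`) and `B` (with
`|B| = W`), with no edge inside `A`, every vertex of `A` of degree at most `W`
and every vertex of `B` of degree at most `W + R - 1`.  If `t` is nonnegative
on edges and `∑_{e ∈ δ(v)} t_e ≤ 1` for every vertex `v`, then
`∑_{e ∈ E} ⌈t_e / t^g⌉ < (1/2)(W² + (2R - 1)W + (W + R)/t^g)`. -/
theorem ec_edge_count_bound {V : Type*} [Fintype V] [DecidableEq V]
    (G : SimpleGraph V) [DecidableRel G.Adj]
    (W R : ℕ) (hWR : 1 ≤ W + R)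
    (A B : Finset V) (hdisj : Disjoint A B) (hcover : A ∪ B = Finset.univ)
    (hA : A.card = R) (hB : B.card = W)
    (hnoAA : ∀ e ∈ G.edgeSet, ∃ v ∈ e, v ∈ B)
    (hdegA : ∀ v ∈ A, G.degree v ≤ W) (hdegB : ∀ v ∈ B, G.degree v ≤ W + R - 1)
    (tg : ℝ) (htg : 0 < tg) (t : Sym2 V → ℝ)
    (ht0 : ∀ e ∈ G.edgeSet, 0 ≤ t e)
    (hnode : ∀ v : V, ∑ e ∈ G.incidenceFinset v, t e ≤ 1) :
    ((∑ e ∈ G.edgeFinset, ⌈t e / tg⌉ : ℤ) : ℝ) <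
      (1 / 2) * ((W : ℝ) ^ 2 + (2 * (R : ℝ) - 1) * (W : ℝ) + ((W : ℝ) + (R : ℝ)) / tg) := by
  classical
  have hWR' : (1 : ℝ) ≤ (W : ℝ) + (R : ℝ) := by exact_mod_cast hWR
  -- cardinality of the vertex set
  have hcardV : Fintype.card V = R + W := by
    rw [← Finset.card_univ, ← hcover, Finset.card_union_of_disjoint hdisj, hA, hB]
  -- each edge contains exactly two vertices
  have h2 : ∀ e ∈ G.edgeFinset, (Finset.univ.filter (fun v => v ∈ e)).card = 2 := by
    intro e he
    rw [SimpleGraph.mem_edgeFinset] at he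
    induction e using Sym2.ind with
    | _ a b =>
      rw [SimpleGraph.mem_edgeSet] at he
      have hab : a ≠ b := G.ne_of_adj he
      have hset : Finset.univ.filter (fun v => v ∈ s(a, b)) = {a, b} := by
        ext v; simp [Sym2.mem_iff]
      rw [hset, Finset.card_insert_of_notMem (by simp [hab]), Finset.card_singleton]
  -- weighted handshake
  have h1 : ∑ v : V, ∑ e ∈ G.incidenceFinset v, t e = 2 * ∑ e ∈ G.edgeFinset, t e := by
    simp_rw [SimpleGraph.incidenceFinset_eq_filter, Finset.sum_filter]
    rw [Finset.sum_comm, Finset.mul_sum]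
    refine Finset.sum_congr rfl fun e he => ?_
    rw [← Finset.sum_filter, Finset.sum_const, h2 e he]
    simp [two_mul]
  -- bound on the total weight
  have ht_sum : 2 * ∑ e ∈ G.edgeFinset, t e ≤ (W : ℝ) + (R : ℝ) := by
    rw [← h1]
    calc ∑ v : V, ∑ e ∈ G.incidenceFinset v, t e ≤ ∑ _v : V, (1 : ℝ) :=
          Finset.sum_le_sum fun v _ => hnode v
      _ = (Fintype.card V : ℝ) := by simp
      _ = (W : ℝ) + (R : ℝ) := by rw [hcardV]; push_cast; ring
  -- degree-sum bound on the number of edges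
  have hEnat : 2 * G.edgeFinset.card ≤ R * W + W * (W + R - 1) := by
    rw [← SimpleGraph.sum_degrees_eq_twice_card_edges]
    have hsplit : ∑ v, G.degree v = ∑ v ∈ A, G.degree v + ∑ v ∈ B, G.degree v := by
      rw [← Finset.sum_union hdisj, hcover]
    have hAsum : ∑ v ∈ A, G.degree v ≤ R * W := by
      calc ∑ v ∈ A, G.degree v ≤ ∑ _v ∈ A, W := Finset.sum_le_sum hdegA
        _ = R * W := by rw [Finset.sum_const, hA, smul_eq_mul]
    have hBsum : ∑ v ∈ B, G.degree v ≤ W * (W + R - 1) := by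
      calc ∑ v ∈ B, G.degree v ≤ ∑ _v ∈ B, (W + R - 1) := Finset.sum_le_sum hdegB
        _ = W * (W + R - 1) := by rw [Finset.sum_const, hB, smul_eq_mul]
    omega
  have hEreal : (G.edgeFinset.card : ℝ) ≤ ((W : ℝ) ^ 2 + (2 * (R : ℝ) - 1) * (W : ℝ)) / 2 := by
    have hc := (Nat.cast_le (α := ℝ)).mpr hEnat
    push_cast [Nat.cast_sub hWR] at hc
    nlinarith [hc]
  rcases Finset.eq_empty_or_nonempty G.edgeFinset with hEe | hEe
  · rw [hEe]
    simp only [Finset.sum_empty, Int.cast_zero]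
    have hp1 : (0 : ℝ) ≤ (W : ℝ) * ((W : ℝ) + (R : ℝ) - 1) :=
      mul_nonneg (Nat.cast_nonneg W) (by linarith)
    have hp2 : (0 : ℝ) ≤ (R : ℝ) * (W : ℝ) :=
      mul_nonneg (Nat.cast_nonneg R) (Nat.cast_nonneg W)
    have hp3 : 0 < ((W : ℝ) + (R : ℝ)) / tg := div_pos (by linarith) htg
    nlinarith [hp1, hp2, hp3]
  · have hceil : ((∑ e ∈ G.edgeFinset, ⌈t e / tg⌉ : ℤ) : ℝ) <
        ∑ e ∈ G.edgeFinset, (t e / tg + 1) := by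
      push_cast
      exact Finset.sum_lt_sum_of_nonempty hEe fun e _ => Int.ceil_lt_add_one _
    rw [Finset.sum_add_distrib, Finset.sum_const, ← Finset.sum_div] at hceil
    have hdiv : (∑ e ∈ G.edgeFinset, t e) / tg ≤ (((W : ℝ) + (R : ℝ)) / 2) / tg := by
      gcongr
      linarith
    have hsmul : (G.edgeFinset.card • (1 : ℝ)) = (G.edgeFinset.card : ℝ) := by simp
    have hring : (((W : ℝ) + (R : ℝ)) / 2) / tg = (1 / 2) * (((W : ℝ) + (R : ℝ)) / tg) := by
      ring
    rw [hsmul] at hceil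
    linarith
end

section
/- Let W, R ∈ ℕ, let t^g > 0 and μ > 0 be real numbers, and let κ be an integer with 1 ≤ κ ≤ 3⌈(W + R + 1/t^g − 1)/2⌉. Then min(μ/(κ t^g), μ) > (2 / (3[(W + R + 1) t^g + 1])) · μ. -/
/-- performance bound of Theorem 2: if `μ > 0`, `t^g > 0` and
`1 ≤ κ ≤ 3⌈(W + R + 1/t^g - 1)/2⌉`, then
`min(μ/(κ t^g), μ) > 2μ / (3[(W + R + 1) t^g + 1])`. -/
theorem ec_performance_bound (W R : ℕ) (tg μ : ℝ) (htg : 0 < tg) (hμ : 0 < μ)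
    (κ : ℤ) (hκ1 : 1 ≤ κ)
    (hκ : κ ≤ 3 * ⌈((W : ℝ) + (R : ℝ) + 1 / tg - 1) / 2⌉) :
    2 / (3 * (((W : ℝ) + (R : ℝ) + 1) * tg + 1)) * μ <
      min (μ / ((κ : ℝ) * tg)) μ := by
  have hW : (0:ℝ) ≤ (W:ℝ) := Nat.cast_nonneg _
  have hR : (0:ℝ) ≤ (R:ℝ) := Nat.cast_nonneg _
  have hS : 0 < 3 * (((W : ℝ) + (R : ℝ) + 1) * tg + 1) := by positivity
  have hκpos : (0:ℝ) < (κ:ℝ) := by exact_mod_cast hκ1.trans_lt' (by norm_num)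
  have hκtg : 0 < (κ:ℝ) * tg := mul_pos hκpos htg
  have hceil : ((⌈((W : ℝ) + (R : ℝ) + 1 / tg - 1) / 2⌉ : ℤ) : ℝ) <
      ((W : ℝ) + (R : ℝ) + 1 / tg - 1) / 2 + 1 := Int.ceil_lt_add_one _
  have hκR : (κ:ℝ) ≤ 3 * ((⌈((W : ℝ) + (R : ℝ) + 1 / tg - 1) / 2⌉ : ℤ) : ℝ) := by
    exact_mod_cast hκ
  have hinv : (1 / tg) * tg = 1 := by field_simp
  have hkey : 2 * ((κ:ℝ) * tg) < 3 * (((W : ℝ) + (R : ℝ) + 1) * tg + 1) := by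
    nlinarith [mul_pos htg htg]
  refine lt_min ?_ ?_
  · rw [div_mul_eq_mul_div, div_lt_div_iff₀ hS hκtg]
    nlinarith
  · have h1 : 2 / (3 * (((W : ℝ) + (R : ℝ) + 1) * tg + 1)) < 1 := by
      rw [div_lt_one hS]
      nlinarith [mul_pos htg (add_pos (add_pos_of_nonneg_of_pos hW (by linarith : (0:ℝ) < (R:ℝ)+1)) (by norm_num : (0:ℝ) < 0+1))]
    nlinarith
end

section
/- Let G = (V, E) be a finite simple graph, r ∈ V, and R ≥ 1 an integer. Let G' be the graph on vertex set (V \ {r}) ∪ {r_1, …, r_R} in which two vertices of V \ {r} are adjacent iff they are adjacent in G, each r_i is adjacent to v ∈ V \ {r} iff r is adjacent to v in G, and no two r_i are adjacent; let π map each edge of G' to the edge of G obtained by replacing any r_i by r. Then for a set F ⊆ E of edges of G, the following are equivalent: (a) no two distinct edges of F share a vertex other than r, and at most R edges of F contain r; (b) there exists a matching M of G' such that π restricted to M is injective with image F. -/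
/-- Vertex type of the eNB-expanded graph: the vertices other than the eNB
`r`, together with `R` expanded copies `r_1, …, r_R` of `r`. -/
abbrev ExpVert (V : Type*) (r : V) (R : ℕ) : Type _ := {v : V // v ≠ r} ⊕ Fin R

/-- Projection `π` from expanded vertices back to original vertices: each
expanded eNB `r_i` is mapped back to `r`. -/
def expProj {V : Type*} {r : V} {R : ℕ} : ExpVert V r R → V :=
  Sum.elim (fun v => v.1) (fun _ => r)

/-- The eNB-expanded graph `G'`: two vertices of `V \ {r}` are adjacent iff
they are adjacent in `G`, each `r_i` is adjacent to `v ∈ V \ {r}` iff `r` is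
adjacent to `v` in `G`, and no two `r_i` are adjacent. -/
def ExpGraph {V : Type*} (G : SimpleGraph V) (r : V) (R : ℕ) :
    SimpleGraph (ExpVert V r R) where
  Adj x y := G.Adj (expProj x) (expProj y)
  symm := ⟨fun _ _ h => G.symm.symm _ _ h⟩
  loopless := ⟨fun _ h => G.loopless.irrefl _ h⟩

/-! Both conditions say that each vertex `v` of `G` lies on at most as many edges of `F` as it
has copies in `G'`: one copy if `v ≠ r`, and `R` copies of `r`. Given such an `F`, assign to
every edge at `v` a copy of `v`, injectively, and lift each edge by replacing both endpoints by
their assigned copies; the lifts form a matching because a shared vertex would be a copy of `v`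
assigned to two edges at `v`. Conversely, each copy lies on at most one edge of a matching, so
at most `|π⁻¹ v|` edges of the image contain `v`. -/

open Finset

theorem Finset.exists_injOn_of_card_le {α β : Type*} [Fintype β] [Nonempty β] (s : Finset α)
    (h : #s ≤ Fintype.card β) : ∃ f : α → β, Set.InjOn f s :=
  Set.exists_injOn_iff_injective.2 <|
    (Function.Embedding.nonempty_of_card_le (by simpa using h)).elim fun f => ⟨f, f.injective⟩

theorem SimpleGraph.mem_edgeSet_comap {V W : Type*} (G : SimpleGraph V) (π : W → V)
    (e : Sym2 W) : e ∈ (G.comap π).edgeSet ↔ e.map π ∈ G.edgeSet := by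
  induction e using Sym2.ind
  rfl

theorem Sym2.card_filter_mem_image_map_le {V W : Type*} [DecidableEq V] {π : W → V}
    {M : Finset (Sym2 W)} (hM : ∀ e ∈ M, ∀ f ∈ M, e ≠ f → ∀ w, w ∈ e → w ∉ f) (v : V)
    {S : Finset W} (hS : ∀ w, π w = v → w ∈ S) :
    #((M.image (Sym2.map π)).filter (v ∈ ·)) ≤ #S := by
  rw [filter_image]
  refine card_image_le.trans <| card_le_card_of_forall_subsingleton (fun e w => w ∈ e) ?_ ?_
  · intro e he
    obtain ⟨w, hw, rfl⟩ := Sym2.mem_map.mp (mem_filter.mp he).2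
    exact ⟨w, hS w rfl, hw⟩
  · rintro w - e ⟨he, hwe⟩ f ⟨hf, hwf⟩
    by_contra hef
    exact hM e (mem_filter.mp he).1 f (mem_filter.mp hf).1 hef w hwe hwf

theorem SimpleGraph.exists_matching_comap_image_eq {V W : Type*} [DecidableEq V] {π : W → V}
    (G : SimpleGraph V) {F : Finset (Sym2 V)} (hF : ∀ e ∈ F, e ∈ G.edgeSet)
    (σ : V → Sym2 V → W) (hσ : ∀ v e, π (σ v e) = v)
    (hσinj : ∀ v, Set.InjOn (σ v) {e | e ∈ F ∧ v ∈ e}) :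
    ∃ M : Finset (Sym2 W),
      (∀ e ∈ M, e ∈ (G.comap π).edgeSet) ∧
      (∀ e ∈ M, ∀ f ∈ M, e ≠ f → ∀ w, w ∈ e → w ∉ f) ∧
      Set.InjOn (Sym2.map π) (M : Set (Sym2 W)) ∧
      F = M.image (Sym2.map π) := by
  classical
  set lift : Sym2 V → Sym2 W := fun e => e.map (σ · e)
  have map_lift (e : Sym2 V) : (lift e).map π = e := by
    simp [lift, Sym2.map_map, hσ]
  refine ⟨F.image lift, ?_, ?_, ?_, ?_⟩
  · intro e' he'
    obtain ⟨e, he, rfl⟩ := mem_image.mp he'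
    rw [mem_edgeSet_comap, map_lift]
    exact hF e he
  · intro e' he' f' hf' hne w hwe hwf
    obtain ⟨e, he, rfl⟩ := mem_image.mp he'
    obtain ⟨f, hf, rfl⟩ := mem_image.mp hf'
    obtain ⟨a, ha, rfl⟩ := Sym2.mem_map.mp hwe
    obtain ⟨b, hb, hab⟩ := Sym2.mem_map.mp hwf
    obtain rfl : b = a := by rw [← hσ b, hab, hσ]
    exact hne (congrArg lift (hσinj b ⟨hf, hb⟩ ⟨he, ha⟩ hab).symm)
  · intro e' he' f' hf' h
    obtain ⟨e, -, rfl⟩ := mem_image.mp he'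
    obtain ⟨f, -, rfl⟩ := mem_image.mp hf'
    rw [map_lift, map_lift] at h
    rw [h]
  · rw [image_image]
    simp [Function.comp_def, map_lift]

section Expansion

variable {V : Type*} {r : V} {R : ℕ}

theorem expProj_eq_of_ne {v : V} (hv : v ≠ r) {w : ExpVert V r R} (hw : expProj w = v) :
    w = .inl ⟨v, hv⟩ := by
  cases w with
  | inl u => exact congrArg Sum.inl (Subtype.ext hw)
  | inr i => exact absurd hw.symm hv

theorem expProj_eq_self {w : ExpVert V r R} (hw : expProj w = r) : ∃ i, w = .inr i := by
  cases w with
  | inl u => exact absurd hw u.2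
  | inr i => exact ⟨i, rfl⟩

theorem expGraph_eq_comap (G : SimpleGraph V) : ExpGraph G r R = G.comap expProj := rfl

end Expansion

/-- for a set `F` of edges of `G`, the following are equivalent:
(a) no two distinct edges of `F` share a vertex other than `r` and at most `R`
edges of `F` contain `r`; (b) there is a matching `M` of the expanded graph
`G'` on which `π` (extended to edges) is injective with image `F`. -/
theorem eNB_expansion_equiv {V : Type*} [DecidableEq V]
    (G : SimpleGraph V) (r : V) (R : ℕ) (hR : 1 ≤ R)
    (F : Finset (Sym2 V)) (hF : ∀ e ∈ F, e ∈ G.edgeSet) :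
    ((∀ e ∈ F, ∀ f ∈ F, e ≠ f → ∀ v, v ∈ e → v ∈ f → v = r) ∧
        (F.filter (fun e => r ∈ e)).card ≤ R) ↔
      ∃ M : Finset (Sym2 (ExpVert V r R)),
        (∀ e ∈ M, e ∈ (ExpGraph G r R).edgeSet) ∧
        (∀ e ∈ M, ∀ f ∈ M, e ≠ f → ∀ v, v ∈ e → v ∉ f) ∧
        Set.InjOn (Sym2.map expProj) (M : Set (Sym2 (ExpVert V r R))) ∧
        F = M.image (Sym2.map expProj) := by
  rw [expGraph_eq_comap]
  constructor
  · rintro ⟨hshare, hcard⟩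
    have : Nonempty (Fin R) := ⟨⟨0, hR⟩⟩
    obtain ⟨κ, hκ⟩ :=
      (F.filter (r ∈ ·)).exists_injOn_of_card_le (β := Fin R) (by simpa using hcard)
    refine SimpleGraph.exists_matching_comap_image_eq G hF
      (fun v e => if h : v = r then .inr (κ e) else .inl ⟨v, h⟩) (fun v e => ?_) (fun v => ?_)
    · by_cases h : v = r <;> simp [expProj, h]
    by_cases h : v = r
    · subst h
      simpa [Set.InjOn] using hκ
    · intro e he f hf _
      by_contra hne
      exact h (hshare e he.1 f hf.1 hne v he.2 hf.2)
  · rintro ⟨M, -, hM, -, rfl⟩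
    refine ⟨fun e he f hf hef v hve hvf => ?_, ?_⟩
    · by_contra hv
      have hle := Sym2.card_filter_mem_image_map_le hM v (S := {.inl ⟨v, hv⟩})
        fun w hw => mem_singleton.2 (expProj_eq_of_ne hv hw)
      rw [card_singleton, card_le_one] at hle
      exact hef (hle e (mem_filter.2 ⟨he, hve⟩) f (mem_filter.2 ⟨hf, hvf⟩))
    · simpa using Sym2.card_filter_mem_image_map_le hM r (S := univ.map .inr) fun w hw => by
        obtain ⟨i, rfl⟩ := expProj_eq_self hw
        simp
end

section
/- Let V be a finite set, let D ⊆ V × V be a finite set of arcs with no self-loops, let c : D → ℝ with c_e > 0 for all e, and let t : D → ℝ with t_e ≥ 0 for all e. Then there exists t' : D → ℝ with 0 ≤ t'_e ≤ t_e for every arc e, such that for every vertex v, Σ_{e ∈ D entering v} c_e t'_e − Σ_{e ∈ D leaving v} c_e t'_e = Σ_{e ∈ D entering v} c_e t_e − Σ_{e ∈ D leaving v} c_e t_e, and the support {e ∈ D : t'_e > 0} contains no directed cycle (no sequence of arcs e_1, …, e_m in the support with the head of e_i equal to the tail of e_{i+1}, indices modulo m). -/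
/-!
Among the assignments `0 ≤ t' ≤ t` with the same net inflow as `t`, take one whose support has
the fewest arcs. The visit counts of a closed walk form a circulation: zero net inflow at every
vertex. If a closed walk lay in the support of `t'`, subtracting the largest multiple of this
circulation that keeps `t'` nonnegative would give an admissible assignment vanishing on the
bottleneck arc, contradicting minimality.
-/

open Finset

section NetInflow

variable {V : Type*} [DecidableEq V] (D : Finset (V × V))

def netInflow (f : V × V → ℝ) (v : V) : ℝ :=
  ∑ e ∈ D.filter (fun e => e.2 = v), f e - ∑ e ∈ D.filter (fun e => e.1 = v), f e

variable {D}

lemma netInflow_congr {f g : V × V → ℝ} (h : ∀ e ∈ D, f e = g e) (v : V) :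
    netInflow D f v = netInflow D g v := by
  unfold netInflow
  rw [sum_congr rfl fun e he => h e (mem_filter.mp he).1,
    sum_congr rfl fun e he => h e (mem_filter.mp he).1]

lemma netInflow_sub (f g : V × V → ℝ) (v : V) :
    netInflow D (fun e => f e - g e) v = netInflow D f v - netInflow D g v := by
  simp only [netInflow, sum_sub_distrib]
  ring

lemma netInflow_const_mul (a : ℝ) (f : V × V → ℝ) (v : V) :
    netInflow D (fun e => a * f e) v = a * netInflow D f v := by
  simp only [netInflow, ← mul_sum, mul_sub]

end NetInflow

section ClosedWalk

variable {V : Type*}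

def IsClosedWalk {n : ℕ} (es : Fin n → V × V) : Prop :=
  ∀ i, (es i).2 = (es (finRotate n i)).1

lemma isClosedWalk_of_chain {m : ℕ} {es : Fin (m + 1) → V × V}
    (hchain : ∀ i : Fin m, (es i.castSucc).2 = (es i.succ).1)
    (hwrap : (es (Fin.last m)).2 = (es 0).1) : IsClosedWalk es := by
  intro i
  induction i using Fin.lastCases with
  | last => rwa [finRotate_last]
  | cast i =>
    have : finRotate (m + 1) i.castSucc = i.succ :=
      Fin.ext (coe_finRotate_of_ne_last (Fin.castSucc_lt_last i).ne)
    rw [this]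
    exact hchain i

variable [DecidableEq V]

def visitCount {n : ℕ} (es : Fin n → V × V) (e : V × V) : ℕ :=
  #{i | es i = e}

lemma visitCount_pos {n : ℕ} (es : Fin n → V × V) (i : Fin n) : 0 < visitCount es (es i) :=
  card_pos.mpr ⟨i, by simp⟩

lemma sum_visitCount {n : ℕ} (es : Fin n → V × V) (s : Finset (V × V)) :
    ∑ e ∈ s, visitCount es e = #{i | es i ∈ s} := by
  simp only [visitCount, card_filter]
  rw [sum_comm]
  simp

lemma netInflow_visitCount {n : ℕ} {D : Finset (V × V)} {es : Fin n → V × V}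
    (hw : IsClosedWalk es) (hD : ∀ i, es i ∈ D) (v : V) :
    netInflow D (fun e => (visitCount es e : ℝ)) v = 0 := by
  have hin : #{i | es i ∈ D.filter (fun e => e.2 = v)} = #{i | (es i).2 = v} := by
    simp [hD]
  have hout : #{i | es i ∈ D.filter (fun e => e.1 = v)} = #{i | (es i).1 = v} := by
    simp [hD]
  have hrot : #{i | (es i).2 = v} = #{i | (es i).1 = v} :=
    card_equiv (finRotate n) fun i => by simp [hw i]
  simp only [netInflow, ← Nat.cast_sum, sum_visitCount, hin, hout, hrot, sub_self]

end ClosedWalk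

lemma card_filter_pos_lt {V : Type*} {D : Finset (V × V)} {t t' : V × V → ℝ}
    (hle : ∀ e ∈ D, t' e ≤ t e)
    {e₀ : V × V} (he₀ : e₀ ∈ D) (ht₀ : 0 < t e₀) (ht'₀ : t' e₀ = 0) :
    #(D.filter fun e => 0 < t' e) < #(D.filter fun e => 0 < t e) := by
  refine card_lt_card ((ssubset_iff_of_subset fun e he => ?_).mpr ⟨e₀, ?_, ?_⟩)
  · simp only [mem_filter] at he ⊢
    exact ⟨he.1, he.2.trans_le (hle e he.1)⟩
  · simp [he₀, ht₀]
  · simp [ht'₀]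

section Cancellation

variable {V : Type*} [DecidableEq V] {D : Finset (V × V)} {c t : V × V → ℝ}

/-- The new assignment is `c * t' = c * t - δ * visitCount`, with `δ` the bottleneck
`min (c e * t e / visitCount e)` along the walk. -/
lemma exists_cancel_closedWalk (hc : ∀ e ∈ D, 0 < c e) (ht : ∀ e ∈ D, 0 ≤ t e)
    {n : ℕ} [NeZero n] {es : Fin n → V × V} (hw : IsClosedWalk es)
    (hes : ∀ i, es i ∈ D ∧ 0 < t (es i)) :
    ∃ t' : V × V → ℝ, (∀ e ∈ D, 0 ≤ t' e ∧ t' e ≤ t e) ∧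
      (∀ v, netInflow D (fun e => c e * t' e) v = netInflow D (fun e => c e * t e) v) ∧
      ∃ e ∈ D, 0 < t e ∧ t' e = 0 := by
  set μ : V × V → ℝ := fun e => (visitCount es e : ℝ)
  have hμ : ∀ i, 0 < μ (es i) := fun i => Nat.cast_pos.mpr (visitCount_pos es i)
  obtain ⟨i₀, -, hi₀⟩ :=
    univ.exists_min_image (fun i => c (es i) * t (es i) / μ (es i)) univ_nonempty
  set δ := c (es i₀) * t (es i₀) / μ (es i₀)
  have hδ : 0 ≤ δ :=
    div_nonneg (mul_nonneg (hc _ (hes i₀).1).le (hes i₀).2.le) (hμ i₀).le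
  have hδμ : ∀ e ∈ D, δ * μ e ≤ c e * t e := by
    intro e he
    by_cases hvis : ∃ i, es i = e
    · obtain ⟨i, rfl⟩ := hvis
      exact (le_div_iff₀ (hμ i)).mp (hi₀ i (mem_univ i))
    · have : μ e = 0 := by simpa [μ, visitCount] using hvis
      rw [this, mul_zero]
      exact mul_nonneg (hc e he).le (ht e he)
  set t' : V × V → ℝ := fun e => t e - δ * μ e / c e
  have hct' : ∀ e ∈ D, c e * t' e = c e * t e - δ * μ e := by
    intro e he
    have := (hc e he).ne'
    simp only [t']
    field_simp
  refine ⟨t', fun e he => ⟨?_, ?_⟩, fun v => ?_, es i₀, (hes i₀).1, (hes i₀).2, ?_⟩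
  · exact nonneg_of_mul_nonneg_right (by linarith [hct' e he, hδμ e he]) (hc e he)
  · exact sub_le_self _ (div_nonneg (mul_nonneg hδ (Nat.cast_nonneg _)) (hc e he).le)
  · rw [netInflow_congr hct', netInflow_sub, netInflow_const_mul,
      netInflow_visitCount hw (fun i => (hes i).1), mul_zero, sub_zero]
  · have := hct' _ (hes i₀).1
    have hc₀ := (hc _ (hes i₀).1).ne'
    simp only [δ, div_mul_cancel₀ _ (hμ i₀).ne', sub_self] at this
    exact (mul_eq_zero.mp this).resolve_left hc₀

end Cancellation

theorem acyclic_support_flow_general {V : Type*} [DecidableEq V]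
    (D : Finset (V × V))
    (c : V × V → ℝ) (hc : ∀ e ∈ D, 0 < c e)
    (t : V × V → ℝ) (ht : ∀ e ∈ D, 0 ≤ t e) :
    ∃ t' : V × V → ℝ,
      (∀ e ∈ D, 0 ≤ t' e ∧ t' e ≤ t e) ∧
      (∀ v : V,
        ∑ e ∈ D.filter (fun e => e.2 = v), c e * t' e -
            ∑ e ∈ D.filter (fun e => e.1 = v), c e * t' e =
          ∑ e ∈ D.filter (fun e => e.2 = v), c e * t e -
            ∑ e ∈ D.filter (fun e => e.1 = v), c e * t e) ∧
      ¬ ∃ (m : ℕ) (es : Fin (m + 1) → V × V),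
          (∀ i, es i ∈ D ∧ 0 < t' (es i)) ∧
          (∀ i : Fin m, (es i.castSucc).2 = (es i.succ).1) ∧
          (es (Fin.last m)).2 = (es 0).1 := by
  let admissible : Set (V × V → ℝ) := {t' | (∀ e ∈ D, 0 ≤ t' e ∧ t' e ≤ t e) ∧
    ∀ v, netInflow D (fun e => c e * t' e) v = netInflow D (fun e => c e * t e) v}
  obtain ⟨t', ⟨hbound, hflow⟩, hmin⟩ :=
    (measure fun t' : V × V → ℝ => #(D.filter fun e => 0 < t' e)).wf.has_min admissible
      ⟨t, fun e he => ⟨ht e he, le_rfl⟩, fun _ => rfl⟩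
  refine ⟨t', hbound, hflow, ?_⟩
  rintro ⟨m, es, hes, hchain, hwrap⟩
  obtain ⟨t'', hbound'', hflow'', e₀, he₀, ht'₀, ht''₀⟩ :=
    exists_cancel_closedWalk hc (fun e he => (hbound e he).1)
      (isClosedWalk_of_chain hchain hwrap) hes
  refine hmin t'' ⟨fun e he => ⟨(hbound'' e he).1, (hbound'' e he).2.trans (hbound e he).2⟩,
    fun v => (hflow'' v).trans (hflow v)⟩ ?_
  exact card_filter_pos_lt (fun e he => (hbound'' e he).2) he₀ ht'₀ ht''₀

/-- cycle elimination, used in the proof of Lemma 3: in a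
finite directed network without self-loops, with positive capacities `c` and
nonnegative link times `t`, there is a link-time assignment `t'` with
`0 ≤ t'_e ≤ t_e` producing the same capacity-weighted net inflow at every
vertex, whose support contains no directed cycle. -/
theorem acyclic_support_flow {V : Type*} [Fintype V] [DecidableEq V]
    (D : Finset (V × V)) (hD : ∀ e ∈ D, e.1 ≠ e.2)
    (c : V × V → ℝ) (hc : ∀ e ∈ D, 0 < c e)
    (t : V × V → ℝ) (ht : ∀ e ∈ D, 0 ≤ t e) :
    ∃ t' : V × V → ℝ,
      (∀ e ∈ D, 0 ≤ t' e ∧ t' e ≤ t e) ∧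
      (∀ v : V,
        ∑ e ∈ D.filter (fun e => e.2 = v), c e * t' e -
            ∑ e ∈ D.filter (fun e => e.1 = v), c e * t' e =
          ∑ e ∈ D.filter (fun e => e.2 = v), c e * t e -
            ∑ e ∈ D.filter (fun e => e.1 = v), c e * t e) ∧
      ¬ ∃ (m : ℕ) (es : Fin (m + 1) → V × V),
          (∀ i, es i ∈ D ∧ 0 < t' (es i)) ∧
          (∀ i : Fin m, (es i.castSucc).2 = (es i.succ).1) ∧
          (es (Fin.last m)).2 = (es 0).1 :=
  acyclic_support_flow_general D c hc t ht
end
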